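/- Let G be a digraph compatible with an n-ary cyclic operation c (n ≥ 2). If G contains a directed closed walk of length n², then G has a loop. -/

import Mathlib

/-!
Spreading a closed walk `w` of length `m * n` over the `n` arguments of `c`, the vertices
`v i = c (w i, w (i + m), …, w (i + (n - 1) m))` form a closed walk of length `m`: compatibility
gives the edges, and `v m = v 0` because the argument tuple of `v m` is a rotation of that of `v 0`.
Starting from length `n²` this yields a closed walk of length `n`, and then one of length `1`.
-/

def IsClosedWalk {A : Type*} (E : Set (A × A)) (k : ℕ) (w : ℕ → A) : Prop :=
  w k = w 0 ∧ ∀ i < k, (w i, w (i + 1)) ∈ E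

theorem IsClosedWalk.loop {A : Type*} {E : Set (A × A)} {w : ℕ → A} (hw : IsClosedWalk E 1 w) :
    (w 0, w 0) ∈ E := by
  simpa [hw.1] using hw.2 0 one_pos

section Cyclic

variable {A : Type*} {E : Set (A × A)} {n : ℕ} (hn : 0 < n) {c : (Fin n → A) → A}
  (hcyc : ∀ x : Fin n → A, c x = c (fun i => x ⟨(i.val + 1) % n, Nat.mod_lt _ hn⟩))
include hcyc

theorem apply_eq_apply_succ_of_cyclic {f : ℕ → A} (hf : f n = f 0) :
    c (fun j => f j) = c (fun j => f (j + 1)) := by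
  rw [hcyc]
  congr 1
  funext j
  rcases (Nat.succ_le_of_lt j.isLt : j.val + 1 ≤ n).lt_or_eq with hlt | (heq : j.val + 1 = n)
  · simp only [Nat.mod_eq_of_lt hlt]
  · simp only [heq, Nat.mod_self, hf]

theorem IsClosedWalk.exists_of_length_mul
    (hcomp : ∀ a b : Fin n → A, (∀ i, (a i, b i) ∈ E) → (c a, c b) ∈ E)
    {m : ℕ} {w : ℕ → A} (hw : IsClosedWalk E (m * n) w) :
    ∃ v : ℕ → A, IsClosedWalk E m v := by
  refine ⟨fun i => c (fun j => w (i + j * m)), ?_, fun i hi => hcomp _ _ fun j => ?_⟩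
  · have hrot := apply_eq_apply_succ_of_cyclic hn hcyc (f := fun j => w (j * m))
      (by simpa [mul_comm] using hw.1)
    simpa [add_mul, add_comm] using hrot.symm
  · have hlt : i + j * m < m * n := by nlinarith [j.isLt]
    simpa [add_right_comm] using hw.2 _ hlt

end Cyclic

/-- A digraph compatible with an `n`-ary cyclic operation that contains a directed
closed walk of length `n²` has a loop. -/
theorem stmt9 {A : Type} (E : Set (A × A)) (n : ℕ) (hn : 2 ≤ n)
    (c : (Fin n → A) → A)
    (hcyc : ∀ x : Fin n → A,
      c x = c (fun i => x ⟨(i.val + 1) % n, Nat.mod_lt _ (by omega)⟩))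
    (hcomp : ∀ a b : Fin n → A, (∀ i, (a i, b i) ∈ E) → (c a, c b) ∈ E)
    (w : ℕ → A) (hw0 : w (n ^ 2) = w 0) (hw : ∀ i < n ^ 2, (w i, w (i + 1)) ∈ E) :
    ∃ x : A, (x, x) ∈ E := by
  have hpos : 0 < n := by omega
  have hwalk : IsClosedWalk E (n * n) w := by rw [← sq]; exact ⟨hw0, hw⟩
  obtain ⟨v, hv⟩ := IsClosedWalk.exists_of_length_mul hpos hcyc hcomp hwalk
  obtain ⟨u, hu⟩ := IsClosedWalk.exists_of_length_mul hpos hcyc hcomp (m := 1)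
    (by rwa [one_mul])
  exact ⟨u 0, hu.loop⟩
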